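/- arXiv:1707.07030 — 2 statements merged into one kernel-verified Lean document; each statement's English description precedes it below -/
import Mathlib

section
/- Let M be a smooth manifold with a flat connection ∇ (zero curvature). A vector field X satisfying ∇_{∇_Y Z} X = ∇_Y ∇_Z X for all vector fields Y, Z is closed under the product: if X₁ and X₂ both satisfy this condition, then so does ∇_{X₁} X₂. -/
/-- On a flat (torsion-free) affine manifold, vector fields satisfying
`∇_{∇_Y Z} X = ∇_Y ∇_Z X` for all `Y, Z` (infinitesimal affine
transformations) are closed under the product `∇_{X₁} X₂`. -/
theorem stmt7 (V : Type*) [LieRing V] [LieAlgebra ℝ V]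
    (nabla : V →ₗ[ℝ] V →ₗ[ℝ] V)
    (htor : ∀ X Y : V, nabla X Y - nabla Y X - ⁅X, Y⁆ = 0)
    (hcurv : ∀ X Y Z : V,
      nabla X (nabla Y Z) - nabla Y (nabla X Z) - nabla ⁅X, Y⁆ Z = 0)
    (X₁ X₂ : V)
    (h₁ : ∀ Y Z : V, nabla (nabla Y Z) X₁ = nabla Y (nabla Z X₁))
    (h₂ : ∀ Y Z : V, nabla (nabla Y Z) X₂ = nabla Y (nabla Z X₂)) :
    ∀ Y Z : V, nabla (nabla Y Z) (nabla X₁ X₂) = nabla Y (nabla Z (nabla X₁ X₂)) := by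
  have key : ∀ Z : V, nabla Z (nabla X₁ X₂) = nabla (nabla Z X₁) X₂ := by
    intro Z
    have hc := hcurv Z X₁ X₂
    rw [sub_sub, sub_eq_zero] at hc
    have ht := htor X₁ Z
    rw [sub_sub, sub_eq_zero] at ht
    have e1 : nabla Z X₁ = nabla X₁ Z - ⁅X₁, Z⁆ := by rw [ht]; abel
    rw [hc, e1, map_sub, LinearMap.sub_apply, h₂ X₁ Z, ← lie_skew X₁ Z, map_neg,
      LinearMap.neg_apply]
    abel
  intro Y Z
  rw [key, key, h₁, h₂]
end

section
/- Let M be a flat affine manifold with connection ∇. The space a(M,∇) of infinitesimal affine transformations, with product ∇_X Y, is an associative algebra whose commutator bracket XY − YX equals the Lie bracket of vector fields; in particular a(M,∇) is a Lie subalgebra of the Lie algebra of vector fields on M. -/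
/-- On a flat affine manifold, the space `a(M,∇)` of infinitesimal affine
transformations with product `∇_X Y` is an associative algebra whose commutator
is the Lie bracket of vector fields; in particular it is closed under the
product and under the Lie bracket, hence a Lie subalgebra of the vector
fields. -/
theorem stmt9 (V : Type*) [LieRing V] [LieAlgebra ℝ V]
    (nabla : V →ₗ[ℝ] V →ₗ[ℝ] V)
    (htor : ∀ X Y : V, nabla X Y - nabla Y X - ⁅X, Y⁆ = 0)
    (hcurv : ∀ X Y Z : V,
      nabla X (nabla Y Z) - nabla Y (nabla X Z) - nabla ⁅X, Y⁆ Z = 0) :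
    (∀ X Y : V,
      (∀ Y' Z' : V, nabla (nabla Y' Z') X = nabla Y' (nabla Z' X)) →
      (∀ Y' Z' : V, nabla (nabla Y' Z') Y = nabla Y' (nabla Z' Y)) →
      (nabla X Y - nabla Y X = ⁅X, Y⁆ ∧
       (∀ Y' Z' : V, nabla (nabla Y' Z') (nabla X Y) = nabla Y' (nabla Z' (nabla X Y))) ∧
       (∀ Y' Z' : V, nabla (nabla Y' Z') ⁅X, Y⁆ = nabla Y' (nabla Z' ⁅X, Y⁆)))) ∧
    (∀ X Y Z : V,
      (∀ Y' Z' : V, nabla (nabla Y' Z') X = nabla Y' (nabla Z' X)) →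
      (∀ Y' Z' : V, nabla (nabla Y' Z') Y = nabla Y' (nabla Z' Y)) →
      (∀ Y' Z' : V, nabla (nabla Y' Z') Z = nabla Y' (nabla Z' Z)) →
      nabla (nabla X Y) Z = nabla X (nabla Y Z)) := by
  have prod : ∀ X Y : V,
      (∀ Y' Z' : V, nabla (nabla Y' Z') X = nabla Y' (nabla Z' X)) →
      (∀ Y' Z' : V, nabla (nabla Y' Z') Y = nabla Y' (nabla Z' Y)) →
      (∀ Y' Z' : V, nabla (nabla Y' Z') (nabla X Y) = nabla Y' (nabla Z' (nabla X Y))) := by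
    intro X Y hX hY A B
    calc nabla (nabla A B) (nabla X Y)
        = nabla (nabla (nabla A B) X) Y := (hY (nabla A B) X).symm
      _ = nabla (nabla A (nabla B X)) Y := by rw [hX A B]
      _ = nabla A (nabla (nabla B X) Y) := hY A (nabla B X)
      _ = nabla A (nabla B (nabla X Y)) := by rw [hY B X]
  constructor
  · intro X Y hX hY
    have hb : nabla X Y - nabla Y X = ⁅X, Y⁆ := sub_eq_zero.mp (htor X Y)
    refine ⟨hb, prod X Y hX hY, ?_⟩
    intro A B
    rw [← hb]
    simp only [map_sub, LinearMap.sub_apply]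
    rw [prod X Y hX hY A B, prod Y X hY hX A B]
  · intro X Y Z _ _ hZ
    exact hZ X Y
end
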